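/- (Bias of Gaussian smoothing under L-smoothness.) Let f : ℝ^q → ℝ be differentiable with L-Lipschitz gradient, let μ > 0, let z be a standard Gaussian vector in ℝ^q, and let f_μ(x) = E_z[f(x + μz)] be the Gaussian-smoothed function. Then for every x ∈ ℝ^q, ‖∇f_μ(x) − ∇f(x)‖ ≤ (μ L / 2) · (q + 3)^{3/2}. -/

import Mathlib

open MeasureTheory ProbabilityTheory Real
open scoped ENNReal NNReal

lemma pdf_eq_coe : gaussianPDF 0 1 = fun x => ((gaussianPDFReal 0 1 x).toNNReal : ℝ≥0∞) := by
  funext x; rw [gaussianPDF_def]; rfl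

lemma pdf_nnreal_meas : Measurable (fun x => (gaussianPDFReal 0 1 x).toNNReal) :=
  (measurable_gaussianPDFReal 0 1).real_toNNReal

lemma gauss_int_eq (g : ℝ → ℝ) :
    ∫ t, g t ∂(gaussianReal 0 1) = ∫ t, gaussianPDFReal 0 1 t * g t := by
  rw [gaussianReal_of_var_ne_zero _ one_ne_zero, pdf_eq_coe,
    integral_withDensity_eq_integral_smul pdf_nnreal_meas]
  congr 1; funext t
  rw [NNReal.smul_def, Real.coe_toNNReal _ (gaussianPDFReal_nonneg 0 1 t), smul_eq_mul]

lemma gauss_integrable_iff (g : ℝ → ℝ) :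
    Integrable g (gaussianReal 0 1) ↔ Integrable (fun t => gaussianPDFReal 0 1 t * g t) := by
  rw [gaussianReal_of_var_ne_zero _ one_ne_zero, pdf_eq_coe,
    integrable_withDensity_iff_integrable_smul pdf_nnreal_meas]
  constructor <;> intro h <;> refine h.congr (ae_of_all _ fun t => ?_) <;>
    simp only [NNReal.smul_def, Real.coe_toNNReal _ (gaussianPDFReal_nonneg 0 1 t), smul_eq_mul]

lemma pdf_val (t : ℝ) : gaussianPDFReal 0 1 t = (√(2*π))⁻¹ * rexp (-(1/4)*t^2) * rexp (-(1/4)*t^2) := by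
  simp only [gaussianPDFReal_def, NNReal.coe_one, mul_one, sub_zero]
  rw [mul_assoc, ← Real.exp_add]
  congr 1
  ring

lemma key_pointwise (t : ℝ) : gaussianPDFReal 0 1 t * t^2 ≤ 2 * (√(2*π))⁻¹ * rexp (-(1/4)*t^2) := by
  rw [pdf_val]
  have h1 : t^2 * rexp (-(1/4)*t^2) ≤ 2 := by
    have h := Real.add_one_le_exp (t^2/8)
    have h2 : rexp (t^2/8) * rexp (t^2/8) = rexp (t^2/4) := by
      rw [← Real.exp_add]; ring_nf
    have h0 : (0:ℝ) ≤ 1 + t^2/8 := by positivity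
    have h3 : (1 + t^2/8)^2 ≤ rexp (t^2/4) := by
      rw [← h2, sq]
      exact mul_le_mul (by linarith) (by linarith) h0 (Real.exp_nonneg _)
    have h4 : rexp (-(1/4)*t^2) = (rexp (t^2/4))⁻¹ := by
      rw [← Real.exp_neg]; ring_nf
    rw [h4]
    rw [mul_inv_le_iff₀ (Real.exp_pos _)]
    nlinarith [sq_nonneg (t^2 - 8)]
  have hinv : (0:ℝ) ≤ (√(2*π))⁻¹ := by positivity
  calc (√(2*π))⁻¹ * rexp (-(1/4)*t^2) * rexp (-(1/4)*t^2) * t^2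
      = (√(2*π))⁻¹ * rexp (-(1/4)*t^2) * (t^2 * rexp (-(1/4)*t^2)) := by ring
    _ ≤ (√(2*π))⁻¹ * rexp (-(1/4)*t^2) * 2 := by
        exact mul_le_mul_of_nonneg_left h1 (by positivity)
    _ = 2 * (√(2*π))⁻¹ * rexp (-(1/4)*t^2) := by ring

lemma bound_integrable' : Integrable (fun t : ℝ => 2 * (√(2*π))⁻¹ * rexp (-(1/4)*t^2)) := by
  exact (integrable_exp_neg_mul_sq (by norm_num : (0:ℝ) < 1/4)).const_mul _

lemma intgr2 : Integrable (fun t : ℝ => gaussianPDFReal 0 1 t * t^2) := by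
  refine Integrable.mono' bound_integrable' ?_ (ae_of_all _ fun t => ?_)
  · exact ((measurable_gaussianPDFReal 0 1).mul (measurable_id.pow_const 2)).aestronglyMeasurable
  · rw [Real.norm_eq_abs, abs_of_nonneg (mul_nonneg (gaussianPDFReal_nonneg 0 1 t) (sq_nonneg t))]
    exact key_pointwise t

lemma moment_two_le : ∫ t, gaussianPDFReal 0 1 t * t^2 ≤ 3 := by
  have h := integral_mono intgr2 bound_integrable' key_pointwise
  rw [integral_const_mul, integral_gaussian] at h
  refine h.trans ?_
  have h4 : √(π / (1/4)) = 2 * √π := by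
    rw [show π / (1/4) = 4 * π by ring, Real.sqrt_mul (by norm_num), show √(4:ℝ) = 2 by
      rw [show (4:ℝ) = 2^2 by norm_num, Real.sqrt_sq (by norm_num)]]
  rw [h4]
  have h2 : √(2*π) = √2 * √π := Real.sqrt_mul (by norm_num) _
  have hs2 : (0:ℝ) < √2 := by positivity
  have hsp : (0:ℝ) < √π := Real.sqrt_pos.mpr Real.pi_pos
  rw [h2, mul_inv]
  have h22 : (√2)^2 = 2 := Real.sq_sqrt (by norm_num)
  have key : 2 * ((√2)⁻¹ * (√π)⁻¹) * (2*√π) = 4 / √2 := by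
    field_simp
    ring
  rw [key, div_le_iff₀ hs2]
  nlinarith [h22, hs2]

lemma A1 : Integrable (fun t : ℝ => t^2) (gaussianReal 0 1) :=
  (gauss_integrable_iff _).mpr intgr2

lemma A2 : ∫ t, t^2 ∂(gaussianReal 0 1) ≤ 3 := by
  rw [gauss_int_eq]; exact moment_two_le

section Pi
variable {q : ℕ}

lemma eval_sq_prod (i : Fin q) (y : Fin q → ℝ) :
    (y i)^2 = ∏ j, (fun j => fun t : ℝ => if j = i then t^2 else (1:ℝ)) j (y j) := by
  simp only [Finset.prod_ite_eq', Finset.mem_univ, if_true]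

lemma B1 (i : Fin q) :
    Integrable (fun y : Fin q → ℝ => (y i)^2) (Measure.pi fun _ => gaussianReal 0 1) := by
  letI : MeasureSpace ℝ := ⟨gaussianReal 0 1⟩
  haveI : IsProbabilityMeasure (volume : Measure ℝ) :=
    inferInstanceAs (IsProbabilityMeasure (gaussianReal 0 1))
  haveI : SigmaFinite (volume : Measure ℝ) := inferInstanceAs (SigmaFinite (gaussianReal 0 1))
  show Integrable _ (volume : Measure (Fin q → ℝ))
  simp only [funext fun y => eval_sq_prod i y]
  refine Integrable.fintype_prod (f := fun j => fun t : ℝ => if j = i then t^2 else (1:ℝ))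
    fun j => ?_
  rcases eq_or_ne j i with h | h
  · simp only [h, ↓reduceIte]; exact A1
  · simpa [h] using (integrable_const (1:ℝ) (μ := volume))

lemma B2 (i : Fin q) :
    ∫ y, (y i)^2 ∂(Measure.pi fun _ : Fin q => gaussianReal 0 1) = ∫ t, t^2 ∂(gaussianReal 0 1) := by
  letI : MeasureSpace ℝ := ⟨gaussianReal 0 1⟩
  haveI : IsProbabilityMeasure (volume : Measure ℝ) :=
    inferInstanceAs (IsProbabilityMeasure (gaussianReal 0 1))
  haveI : SigmaFinite (volume : Measure ℝ) := inferInstanceAs (SigmaFinite (gaussianReal 0 1))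
  show ∫ y, _ ∂(volume : Measure (Fin q → ℝ)) = _
  simp only [funext fun y => eval_sq_prod i y]
  rw [MeasureTheory.volume_pi, MeasureTheory.integral_fintype_prod_eq_prod
    (f := fun j => fun t : ℝ => if j = i then t^2 else (1:ℝ))]
  have : ∀ j : Fin q, (∫ t : ℝ, (if j = i then t^2 else (1:ℝ))) =
      (fun j => if j = i then ∫ t, t^2 ∂(gaussianReal 0 1) else 1) j := by
    intro j
    rcases eq_or_ne j i with h | h
    · simp only [h, if_true]; rfl
    · simp [h]
  rw [Finset.prod_congr rfl (fun j _ => this j)]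
  simp only [Finset.prod_ite_eq', Finset.mem_univ, if_true]
end Pi

/-- The standard Gaussian measure on `ℝ^q` (Euclidean space): the `q`-fold product of
the standard real Gaussian, transported to `EuclideanSpace ℝ (Fin q)`. -/
noncomputable def stdGaussian (q : ℕ) : Measure (EuclideanSpace ℝ (Fin q)) :=
  (Measure.pi fun _ : Fin q => gaussianReal 0 1).map
    (MeasurableEquiv.toLp 2 (Fin q → ℝ))

instance stdGaussian_prob (q : ℕ) : IsProbabilityMeasure (stdGaussian q) :=
  Measure.isProbabilityMeasure_map (MeasurableEquiv.measurable _).aemeasurable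

lemma stdGaussian_integral (q : ℕ) (h : EuclideanSpace ℝ (Fin q) → ℝ) :
    ∫ z, h z ∂(stdGaussian q) =
      ∫ y, h ((MeasurableEquiv.toLp 2 (Fin q → ℝ)) y)
        ∂(Measure.pi fun _ : Fin q => gaussianReal 0 1) :=
  MeasureTheory.integral_map_equiv _ _

lemma stdGaussian_integrable_iff (q : ℕ) (h : EuclideanSpace ℝ (Fin q) → ℝ) :
    Integrable h (stdGaussian q) ↔
      Integrable (fun y => h ((MeasurableEquiv.toLp 2 (Fin q → ℝ)) y))
        (Measure.pi fun _ : Fin q => gaussianReal 0 1) :=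
  MeasureTheory.integrable_map_equiv _ _

lemma norm_sq_eq (q : ℕ) (y : Fin q → ℝ) :
    ‖(MeasurableEquiv.toLp 2 (Fin q → ℝ)) y‖^2 = ∑ i, (y i)^2 := by
  rw [EuclideanSpace.norm_eq, Real.sq_sqrt (by positivity)]
  simp only [Real.norm_eq_abs, sq_abs]
  rfl

lemma C1 (q : ℕ) : Integrable (fun z => ‖z‖^2) (stdGaussian q) := by
  rw [stdGaussian_integrable_iff]
  simp only [norm_sq_eq]
  exact integrable_finset_sum _ fun i _ => B1 i

lemma C1' (q : ℕ) : ∫ z, ‖z‖^2 ∂(stdGaussian q) ≤ 3 * q := by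
  rw [stdGaussian_integral]
  simp only [norm_sq_eq]
  rw [integral_finset_sum _ fun i _ => B1 i]
  calc (∑ i : Fin q, ∫ y, (y i)^2 ∂(Measure.pi fun _ : Fin q => gaussianReal 0 1))
      = ∑ _i : Fin q, ∫ t, t^2 ∂(gaussianReal 0 1) := by
        exact Finset.sum_congr rfl fun i _ => B2 i
    _ ≤ ∑ _i : Fin q, (3:ℝ) := Finset.sum_le_sum fun i _ => A2
    _ = 3 * q := by simp [mul_comm]

lemma C2 (q : ℕ) : Integrable (fun z => ‖z‖) (stdGaussian q) := by
  refine Integrable.mono' (((C1 q).const_mul (1/2)).add (integrable_const (1/2)))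
    (continuous_norm.aestronglyMeasurable) (ae_of_all _ fun z => ?_)
  rw [Real.norm_eq_abs, abs_of_nonneg (norm_nonneg z)]
  show ‖z‖ ≤ 1/2 * ‖z‖^2 + 1/2
  nlinarith [sq_nonneg (‖z‖ - 1), norm_nonneg z]

lemma C2' (q : ℕ) : ∫ z, ‖z‖ ∂(stdGaussian q) ≤ (1 + 3 * q) / 2 := by
  have h1 : ∫ z, ‖z‖ ∂(stdGaussian q) ≤ ∫ z, ((1/2) * ‖z‖^2 + 1/2) ∂(stdGaussian q) := by
    refine integral_mono (C2 q) (((C1 q).const_mul (1/2)).add (integrable_const (1/2)))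
      fun z => ?_
    nlinarith [sq_nonneg (‖z‖ - 1)]
  rw [integral_add ((C1 q).const_mul (1/2)) (integrable_const _), integral_const_mul _ _,
    integral_const] at h1
  have := C1' q
  simp only [probReal_univ, smul_eq_mul, one_mul] at h1
  linarith

/-- **Bias of Gaussian smoothing under L-smoothness.**  If `f : ℝ^q → ℝ` is
differentiable with `L`-Lipschitz gradient, `μ > 0`, and
`f_μ(x) = E_z[f(x + μz)]` is the Gaussian-smoothed function, then for every `x`,
`‖∇f_μ(x) − ∇f(x)‖ ≤ (μL/2)·(q + 3)^{3/2}`. -/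
theorem stmt8 (q : ℕ) (Lc : ℝ) (hLc : 0 ≤ Lc)
    (f : EuclideanSpace ℝ (Fin q) → ℝ) (μ : ℝ) (hμ : 0 < μ)
    (hf : Differentiable ℝ f)
    (hlip : ∀ x y, ‖gradient f x - gradient f y‖ ≤ Lc * ‖x - y‖)
    (x : EuclideanSpace ℝ (Fin q)) :
    ‖gradient (fun x' => ∫ z, f (x' + μ • z) ∂(stdGaussian q)) x - gradient f x‖
      ≤ (μ * Lc / 2) * ((q : ℝ) + 3) ^ ((3 : ℝ) / 2) := by
  set ν := stdGaussian q with hν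
  set g := gradient f with hg
  set D := InnerProductSpace.toDual ℝ (EuclideanSpace ℝ (Fin q)) with hD
  -- basic facts
  have hgrad : ∀ y, fderiv ℝ f y = D (g y) := fun y =>
    ((hf y).hasGradientAt.hasFDerivAt).fderiv
  have hDnorm : ∀ v : EuclideanSpace ℝ (Fin q), ‖D v‖ = ‖v‖ := fun v =>
    (InnerProductSpace.toDual ℝ (EuclideanSpace ℝ (Fin q))).norm_map v
  have gcont : Continuous g := by
    have hl : LipschitzWith Lc.toNNReal g := LipschitzWith.of_dist_le_mul fun a b => by
      rw [dist_eq_norm, dist_eq_norm, Real.coe_toNNReal _ hLc]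
      exact hlip a b
    exact hl.continuous
  have haff2 : ∀ x' : EuclideanSpace ℝ (Fin q),
      Continuous fun z : EuclideanSpace ℝ (Fin q) => x' + μ • z := fun x' =>
    continuous_const.add (continuous_id.const_smul μ)
  -- differentiability of the inner function
  have hasfd : ∀ (x' z : EuclideanSpace ℝ (Fin q)),
      HasFDerivAt (fun x'' => f (x'' + μ • z)) (D (g (x' + μ • z))) x' := by
    intro x' z
    have h1 : HasFDerivAt (fun x'' : EuclideanSpace ℝ (Fin q) => x'' + μ • z)
        (ContinuousLinearMap.id ℝ (EuclideanSpace ℝ (Fin q))) x' :=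
      (hasFDerivAt_id x').add_const _
    have h2 : HasFDerivAt f (fderiv ℝ f (x' + μ • z)) (x' + μ • z) :=
      (hf (x' + μ • z)).hasFDerivAt
    have h3 := h2.comp x' h1
    rw [ContinuousLinearMap.comp_id] at h3
    rwa [hgrad] at h3
  -- pointwise gradient norm bounds
  have hgbound : ∀ y : EuclideanSpace ℝ (Fin q), ‖g y‖ ≤ ‖g x‖ + Lc * ‖y - x‖ := fun y => by
    calc ‖g y‖ = ‖g x + (g y - g x)‖ := by congr 1; abel
      _ ≤ ‖g x‖ + ‖g y - g x‖ := norm_add_le _ _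
      _ ≤ ‖g x‖ + Lc * ‖y - x‖ := by linarith [hlip y x]
  -- integrability of f(x + μz)
  have hFint : Integrable (fun z => f (x + μ • z)) ν := by
    refine Integrable.mono'
      ((((integrable_const (|f x|)).add ((C2 q).const_mul (‖g x‖ * μ))).add
        ((C1 q).const_mul (Lc * μ^2)))) ((hf.continuous.comp (haff2 x)).aestronglyMeasurable)
      (ae_of_all _ fun z => ?_)
    have hr : 0 ≤ μ * ‖z‖ := mul_nonneg hμ.le (norm_nonneg z)
    have hmem : x + μ • z ∈ Metric.closedBall x (μ * ‖z‖) := by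
      rw [Metric.mem_closedBall, dist_eq_norm, add_sub_cancel_left, norm_smul,
        Real.norm_eq_abs, abs_of_pos hμ]
    have key : ‖f (x + μ • z) - f x‖ ≤ (‖g x‖ + Lc * (μ * ‖z‖)) * ‖(x + μ • z) - x‖ := by
      refine (convex_closedBall x (μ * ‖z‖)).norm_image_sub_le_of_norm_fderiv_le
        (fun y _ => hf y) (fun y hy => ?_)
        (Metric.mem_closedBall_self hr) hmem
      rw [hgrad, hDnorm]
      refine (hgbound y).trans ?_
      have hy' : ‖y - x‖ ≤ μ * ‖z‖ := by
        rw [← dist_eq_norm]; exact Metric.mem_closedBall.mp hy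
      nlinarith
    rw [add_sub_cancel_left, norm_smul, Real.norm_eq_abs μ, abs_of_pos hμ] at key
    rw [Real.norm_eq_abs]
    rw [Real.norm_eq_abs] at key
    have habs : |f (x + μ • z)| ≤ |f x| + |f (x + μ • z) - f x| := by
      calc |f (x + μ • z)| = |f x + (f (x + μ • z) - f x)| := by congr 1; ring
        _ ≤ |f x| + |f (x + μ • z) - f x| := abs_add_le _ _
    simp only [Pi.add_apply]
    calc |f (x + μ • z)| ≤ |f x| + (‖g x‖ + Lc * (μ * ‖z‖)) * (μ * ‖z‖) := by
          refine habs.trans ?_; linarith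
      _ = |f x| + ‖g x‖ * μ * ‖z‖ + Lc * μ^2 * ‖z‖^2 := by ring
  -- integrability of the gradient field
  have hGint : Integrable (fun z => g (x + μ • z)) ν := by
    refine Integrable.mono' ((integrable_const ‖g x‖).add ((C2 q).const_mul (Lc * μ)))
      ((gcont.comp (haff2 x)).aestronglyMeasurable) (ae_of_all _ fun z => ?_)
    refine (hgbound _).trans ?_
    rw [add_sub_cancel_left, norm_smul, Real.norm_eq_abs, abs_of_pos hμ]
    simp only [Pi.add_apply]
    exact le_of_eq (by ring)
  -- differentiation under the integral sign
  have main : HasFDerivAt (fun x' => ∫ z, f (x' + μ • z) ∂ν)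
      (∫ z, D (g (x + μ • z)) ∂ν) x := by
    refine hasFDerivAt_integral_of_dominated_of_fderiv_le
      (F := fun x' z => f (x' + μ • z)) (F' := fun x' z => D (g (x' + μ • z)))
      (bound := fun z => ‖g x‖ + Lc * (1 + μ * ‖z‖)) (s := Metric.ball x 1) (Metric.ball_mem_nhds x one_pos)
      (Filter.Eventually.of_forall fun x' =>
        (hf.continuous.comp (haff2 x')).aestronglyMeasurable) hFint
      ((D.continuous.comp (gcont.comp (haff2 x))).aestronglyMeasurable)
      (ae_of_all _ fun z x' hx' => ?_)
      (((integrable_const (‖g x‖ + Lc)).add (((C2 q).const_mul μ).const_mul Lc)).congr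
        (ae_of_all _ fun z => ?_))
      (ae_of_all _ fun z x' _ => hasfd x' z)
    · rw [hDnorm]
      refine (hgbound _).trans ?_
      have h1 : ‖x' + μ • z - x‖ ≤ ‖x' - x‖ + μ * ‖z‖ := by
        calc ‖x' + μ • z - x‖ = ‖(x' - x) + μ • z‖ := by congr 1; abel
          _ ≤ ‖x' - x‖ + ‖μ • z‖ := norm_add_le _ _
          _ = ‖x' - x‖ + μ * ‖z‖ := by
              rw [norm_smul, Real.norm_eq_abs, abs_of_pos hμ]
      have h2 : ‖x' - x‖ < 1 := by rw [← dist_eq_norm]; exact Metric.mem_ball.mp hx'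
      show _ ≤ ‖g x‖ + Lc * (1 + μ * ‖z‖)
      nlinarith [mul_le_mul_of_nonneg_left h1 hLc, mul_le_mul_of_nonneg_left h2.le hLc]
    · simp only [Pi.add_apply]
      ring
  -- identify the gradient of the smoothed function
  have swap : ∫ z, D (g (x + μ • z)) ∂ν = D (∫ z, g (x + μ • z) ∂ν) :=
    D.toLinearIsometry.integral_comp_comm _
  rw [swap] at main
  have hgradsmooth : gradient (fun x' => ∫ z, f (x' + μ • z) ∂ν) x
      = ∫ z, g (x + μ • z) ∂ν :=
    (hasGradientAt_iff_hasFDerivAt.mpr main).gradient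
  rw [hgradsmooth]
  -- final estimate
  have hsub : ∫ z, (g (x + μ • z) - g x) ∂ν = (∫ z, g (x + μ • z) ∂ν) - g x := by
    rw [integral_sub hGint (integrable_const _), integral_const, probReal_univ,
      one_smul]
  rw [← hsub]
  have step1 : ‖∫ z, (g (x + μ • z) - g x) ∂ν‖ ≤ ∫ z, (Lc * μ) * ‖z‖ ∂ν := by
    refine (norm_integral_le_integral_norm _).trans ?_
    refine integral_mono ((hGint.sub (integrable_const _)).norm) ((C2 q).const_mul _)
      fun z => ?_
    refine (hlip _ _).trans ?_
    rw [add_sub_cancel_left, norm_smul, Real.norm_eq_abs, abs_of_pos hμ]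
    exact le_of_eq (by ring)
  refine step1.trans ?_
  rw [integral_const_mul]
  have step2 : (Lc * μ) * ∫ z, ‖z‖ ∂ν ≤ (Lc * μ) * ((1 + 3 * q) / 2) :=
    mul_le_mul_of_nonneg_left (C2' q) (mul_nonneg hLc hμ.le)
  refine step2.trans ?_
  -- numeric: 1 + 3q ≤ (q+3)^(3/2)
  have hq3 : (0:ℝ) ≤ (q:ℝ) + 3 := by positivity
  have hrpow : ((q:ℝ) + 3) ^ ((3:ℝ)/2) = √(((q:ℝ) + 3)^3) := by
    rw [Real.sqrt_eq_rpow, ← Real.rpow_natCast ((q:ℝ) + 3) 3, ← Real.rpow_mul hq3]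
    norm_num
  have hnum : (1 + 3 * (q:ℝ)) ≤ ((q:ℝ) + 3) ^ ((3:ℝ)/2) := by
    rw [hrpow, show (1 + 3 * (q:ℝ)) = √((1 + 3 * (q:ℝ))^2) by
      rw [Real.sqrt_sq (by positivity)]]
    refine Real.sqrt_le_sqrt ?_
    nlinarith [Nat.cast_nonneg (α := ℝ) q]
  calc (Lc * μ) * ((1 + 3 * q) / 2) = (μ * Lc / 2) * (1 + 3 * q) := by ring
    _ ≤ (μ * Lc / 2) * (((q:ℝ) + 3) ^ ((3:ℝ)/2)) :=
        mul_le_mul_of_nonneg_left hnum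
          (div_nonneg (mul_nonneg hμ.le hLc) (by norm_num))
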